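/- Exchangeable rank identity under continuity: let φ_1, …, φ_m, φ_{m+1} be i.i.d. real-valued random variables on a probability space (Ω, F, P) with m ≥ 1, and assume P(φ_i = φ_j) = 0 for all i ≠ j (almost surely no ties). Let 1 ≤ k ≤ m and, for each ω ∈ Ω, let φ_{(k)}(ω) denote the k-th smallest value (counted with multiplicity) among φ_1(ω), …, φ_m(ω). Then P( φ_{m+1} ≤ φ_{(k)} ) = k/(m+1). -/

import Mathlib

open Finset Real

noncomputable section

/-- The `k`-th smallest value (counted with multiplicity) among `g 0, …, g (m-1)`. -/
noncomputable def orderStat (m : ℕ) (g : Fin m → ℝ) (k : ℕ) : ℝ :=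
  (List.insertionSort (· ≤ ·) (List.ofFn g)).getD (k - 1) 0

/-!
Let `R` be the number of `φ₁, …, φₘ` lying strictly below `φₘ₊₁`, i.e. the rank of `φₘ₊₁`
among all `m + 1` values. Reading the sorted list, `φₘ₊₁ ≤ φ₍ₖ₎` holds exactly when `R < k`.
An i.i.d. vector is exchangeable, so all `m + 1` coordinates have ranks with the same law; and
since there are almost surely no ties, the ranks almost surely form a permutation of
`{0, …, m}`, so each value `r ≤ m` is the rank of exactly one coordinate. Summing over the
coordinates, each rank value has probability `1 / (m + 1)`, whence `P(R < k) = k / (m + 1)`.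
-/

namespace List

variable {α : Type*} [LinearOrder α] {L : List α}

theorem lt_countP_lt_of_getElem_lt (hL : L.Pairwise (· ≤ ·)) {j : ℕ} (hj : j < L.length)
    {t : α} (h : L[j] < t) : j < L.countP (· < t) := by
  have hprefix : ∀ a ∈ L.take (j + 1), a < t := by
    intro a ha
    obtain ⟨i, hi, rfl⟩ := mem_iff_getElem.mp ha
    rw [getElem_take]
    rw [length_take] at hi
    exact (hL.rel_get_of_le (a := ⟨i, by omega⟩) (b := ⟨j, hj⟩) (by simp; omega)).trans_lt h
  calc j < (L.take (j + 1)).length := by rw [length_take]; omega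
    _ = (L.take (j + 1)).countP (· < t) := by
        rw [countP_eq_length.mpr (by simpa using hprefix)]
    _ ≤ L.countP (· < t) := (take_sublist _ _).countP_le

theorem countP_lt_le_of_le_getElem (hL : L.Pairwise (· ≤ ·)) {j : ℕ} (hj : j < L.length)
    {t : α} (h : t ≤ L[j]) : L.countP (· < t) ≤ j := by
  have hsuffix : (L.drop j).countP (· < t) = 0 := by
    refine countP_eq_zero.mpr fun a ha => ?_
    obtain ⟨i, hi, rfl⟩ := mem_iff_getElem.mp ha
    rw [getElem_drop]
    rw [length_drop] at hi
    simpa using h.trans (hL.rel_get_of_le (a := ⟨j, hj⟩) (b := ⟨j + i, by omega⟩) (by simp))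
  calc L.countP (· < t) = (L.take j).countP (· < t) + (L.drop j).countP (· < t) := by
        rw [← countP_append, take_append_drop]
    _ ≤ j := by rw [hsuffix]; exact countP_le_length.trans (by simp)

theorem getElem_lt_iff_lt_countP (hL : L.Pairwise (· ≤ ·)) {j : ℕ} (hj : j < L.length)
    (t : α) : L[j] < t ↔ j < L.countP (· < t) :=
  ⟨lt_countP_lt_of_getElem_lt hL hj, fun h => not_le.mp fun h' =>
    (countP_lt_le_of_le_getElem hL hj h').not_gt h⟩

omit [LinearOrder α] in
theorem countP_ofFn {m : ℕ} (g : Fin m → α) (p : α → Bool) :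
    (ofFn g).countP p = #{i | p (g i)} := by
  induction m with
  | zero => simp
  | succ n ih =>
    rw [ofFn_succ, countP_cons, Fin.card_filter_univ_succ' (fun i => p (g i)), ih]
    simp [add_comm]

end List

theorem le_orderStat_iff {m k : ℕ} (hk1 : 1 ≤ k) (hkm : k ≤ m) (g : Fin m → ℝ) (t : ℝ) :
    t ≤ orderStat m g k ↔ #{i | g i < t} < k := by
  have hperm := List.perm_insertionSort (· ≤ ·) (List.ofFn g)
  have hlen : ((List.ofFn g).insertionSort (· ≤ ·)).length = m := by simp
  rw [orderStat, List.getD_eq_getElem _ _ (by omega), ← not_lt,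
    List.getElem_lt_iff_lt_countP (List.pairwise_insertionSort _ _), hperm.countP_eq,
    List.countP_ofFn]
  simp only [decide_eq_true_eq]
  omega

namespace Tuple

variable {ι α : Type*} [Fintype ι] [LinearOrder α]

def rank (x : ι → α) (j : ι) : ℕ := #{i | x i < x j}

theorem rank_lt_card (x : ι → α) (j : ι) : rank x j < Fintype.card ι :=
  card_lt_univ_of_notMem (x := j) (by simp)

theorem rank_lt_rank {x : ι → α} {j j' : ι} (h : x j < x j') : rank x j < rank x j' :=
  card_lt_card <| (ssubset_iff_of_subset fun i hi => by simp_all [lt_trans _ h]).mpr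
    ⟨j, by simp [h], by simp⟩

theorem rank_injective {x : ι → α} (hx : Function.Injective x) :
    Function.Injective (rank x) := by
  intro j j' h
  rcases lt_trichotomy (x j) (x j') with hlt | heq | hgt
  · exact absurd h (rank_lt_rank hlt).ne
  · exact hx heq
  · exact absurd h (rank_lt_rank hgt).ne'

theorem existsUnique_rank_eq {x : ι → α} (hx : Function.Injective x) {r : ℕ}
    (hr : r < Fintype.card ι) : ∃! j, rank x j = r := by
  let rankFin : ι → Fin (Fintype.card ι) := fun j => ⟨rank x j, rank_lt_card x j⟩
  have hbij : Function.Bijective rankFin :=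
    (Fintype.bijective_iff_injective_and_card rankFin).mpr
      ⟨fun j j' h => rank_injective hx (Fin.val_eq_of_eq h), by simp⟩
  simpa [rankFin, Fin.ext_iff] using hbij.existsUnique ⟨r, hr⟩

theorem rank_comp_perm (x : ι → α) (e : Equiv.Perm ι) (j : ι) :
    rank (x ∘ e) j = rank x (e j) :=
  card_equiv e (by simp)

theorem rank_last {m : ℕ} (x : Fin (m + 1) → α) :
    rank x (Fin.last m) = #{i : Fin m | x i.castSucc < x (Fin.last m)} := by
  rw [rank, card_filter, card_filter, Fin.sum_univ_castSucc]
  simp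

end Tuple

open MeasureTheory ProbabilityTheory Tuple

theorem MeasureTheory.Measure.pi_map_comp_perm {ι β : Type*} [Fintype ι] [MeasurableSpace β]
    (μ : ι → Measure β) [∀ i, SigmaFinite (μ i)] (e : Equiv.Perm ι) :
    (Measure.pi μ).map (· ∘ e) = Measure.pi fun i => μ (e i) := by
  rw [← Measure.pi_map_piCongrLeft e μ, Measure.map_map (by fun_prop) (by fun_prop)]
  convert Measure.map_id
  ext x i
  simp [MeasurableEquiv.coe_piCongrLeft, Equiv.piCongrLeft_apply_apply]

section Exchangeable

variable {Ω ι β : Type*} [MeasurableSpace Ω] {P : Measure Ω} [Fintype ι]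

theorem ae_injective_of_measure_eq_zero {X : ι → Ω → β}
    (hties : ∀ i j, i ≠ j → P {ω | X i ω = X j ω} = 0) :
    ∀ᵐ ω ∂P, Function.Injective (X · ω) := by
  have hpair : ∀ i j, ∀ᵐ ω ∂P, X i ω = X j ω → i = j := fun i j => by
    by_cases hij : i = j
    · subst hij
      exact .of_forall fun _ _ => rfl
    · filter_upwards [measure_eq_zero_iff_ae_notMem.mp (hties i j hij)] with ω hω h
      exact absurd h hω
  filter_upwards [ae_all_iff.2 fun i => ae_all_iff.2 (hpair i)] with ω hω i j using hω i j

variable [MeasurableSpace β]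

def ProbabilityTheory.Exchangeable (X : ι → Ω → β) (P : Measure Ω) : Prop :=
  ∀ e : Equiv.Perm ι, P.map (fun ω i => X (e i) ω) = P.map (fun ω i => X i ω)

theorem ProbabilityTheory.iIndepFun.exchangeable [IsProbabilityMeasure P] {X : ι → Ω → β}
    (hmeas : ∀ i, Measurable (X i)) (hindep : iIndepFun X P)
    (hid : ∀ i j, P.map (X i) = P.map (X j)) : Exchangeable X P := by
  intro e
  calc P.map (fun ω i => X (e i) ω) = (P.map fun ω i => X i ω).map (· ∘ e) :=
        (Measure.map_map (measurable_pi_lambda _ fun i => measurable_pi_apply (e i))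
          (measurable_pi_lambda _ hmeas)).symm
    _ = Measure.pi fun i => P.map (X (e i)) := by
        rw [hindep.map_fun_eq_pi_map fun i => (hmeas i).aemeasurable, Measure.pi_map_comp_perm]
    _ = P.map (fun ω i => X i ω) := by
        rw [hindep.map_fun_eq_pi_map fun i => (hmeas i).aemeasurable]
        exact congrArg Measure.pi (funext fun i => hid _ _)

variable {X : ι → Ω → ℝ} (hmeas : ∀ i, Measurable (X i))
include hmeas

theorem measurableSet_rank_eq (j : ι) (r : ℕ) : MeasurableSet {ω | rank (X · ω) j = r} := by
  simp only [rank, card_filter]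
  exact Finset.measurable_sum _ (fun i _ => Measurable.ite
    (measurableSet_lt (hmeas i) (hmeas j)) measurable_const measurable_const)
    (measurableSet_singleton r)

theorem measure_rank_eq_of_exchangeable (hexch : Exchangeable X P) (j j' : ι) (r : ℕ) :
    P {ω | rank (X · ω) j = r} = P {ω | rank (X · ω) j' = r} := by
  classical
  have hS : MeasurableSet {x : ι → ℝ | rank x j' = r} :=
    measurableSet_rank_eq measurable_pi_apply j' r
  calc P {ω | rank (X · ω) j = r} = P {ω | rank ((X · ω) ∘ Equiv.swap j j') j' = r} := by
        simp only [rank_comp_perm, Equiv.swap_apply_right]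
    _ = P.map (fun ω i => X (Equiv.swap j j' i) ω) {x | rank x j' = r} :=
        (Measure.map_apply (measurable_pi_lambda _ fun i => hmeas _) hS).symm
    _ = P.map (fun ω i => X i ω) {x | rank x j' = r} := by rw [hexch]
    _ = P {ω | rank (X · ω) j' = r} := Measure.map_apply (measurable_pi_lambda _ hmeas) hS

theorem sum_measure_rank_eq_one [IsProbabilityMeasure P]
    (hinj : ∀ᵐ ω ∂P, Function.Injective (X · ω)) {r : ℕ} (hr : r < Fintype.card ι) :
    ∑ j, P {ω | rank (X · ω) j = r} = 1 := by
  have hdisj : Pairwise (Function.onFun (AEDisjoint P) fun j => {ω | rank (X · ω) j = r}) :=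
    fun j j' hjj' => measure_eq_zero_iff_ae_notMem.mpr <| hinj.mono fun ω hω hmem =>
      hjj' (rank_injective hω (hmem.1.trans hmem.2.symm))
  have hcover : ∀ᵐ ω ∂P, ω ∈ ⋃ j, {ω | rank (X · ω) j = r} := hinj.mono fun ω hω =>
    Set.mem_iUnion.2 (existsUnique_rank_eq hω hr).exists
  have hmeasU := MeasurableSet.iUnion fun j => measurableSet_rank_eq hmeas j r
  calc ∑ j, P {ω | rank (X · ω) j = r} = P (⋃ j, {ω | rank (X · ω) j = r}) := by
        rw [measure_iUnion₀ hdisj fun j => (measurableSet_rank_eq hmeas j r).nullMeasurableSet,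
          tsum_fintype]
    _ = P Set.univ := (ae_mem_iff_measure_eq hmeasU.nullMeasurableSet).mp hcover
    _ = 1 := measure_univ

theorem measure_rank_eq_inv_card [IsProbabilityMeasure P] (hexch : Exchangeable X P)
    (hinj : ∀ᵐ ω ∂P, Function.Injective (X · ω)) (j : ι)
    {r : ℕ} (hr : r < Fintype.card ι) :
    P {ω | rank (X · ω) j = r} = (Fintype.card ι : ENNReal)⁻¹ := by
  have hsum := sum_measure_rank_eq_one hmeas hinj hr
  simp_rw [measure_rank_eq_of_exchangeable hmeas hexch _ j r, sum_const, card_univ,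
    nsmul_eq_mul] at hsum
  exact ENNReal.eq_inv_of_mul_eq_one_left ((mul_comm _ _).trans hsum)

theorem measure_rank_lt_eq [IsProbabilityMeasure P] (hexch : Exchangeable X P)
    (hinj : ∀ᵐ ω ∂P, Function.Injective (X · ω)) (j : ι)
    {k : ℕ} (hk : k ≤ Fintype.card ι) :
    P {ω | rank (X · ω) j < k} = k / Fintype.card ι := by
  have hunion : {ω | rank (X · ω) j < k} = ⋃ r ∈ range k, {ω | rank (X · ω) j = r} := by
    ext ω; simp
  have hdisj : (range k : Set ℕ).PairwiseDisjoint fun r => {ω | rank (X · ω) j = r} :=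
    fun r _ r' _ hrr' => Set.disjoint_left.2 fun ω h h' => hrr' (h.symm.trans h')
  rw [hunion, measure_biUnion_finset hdisj fun r _ => measurableSet_rank_eq hmeas j r,
    sum_congr rfl fun r hr => measure_rank_eq_inv_card hmeas hexch hinj j
      ((mem_range.1 hr).trans_le hk), sum_const, card_range, nsmul_eq_mul, div_eq_mul_inv]

end Exchangeable

theorem exchangeable_rank_identity_general {Ω : Type*} [MeasurableSpace Ω]
    (P : MeasureTheory.Measure Ω) [MeasureTheory.IsProbabilityMeasure P]
    (m : ℕ) (φ : Fin (m + 1) → Ω → ℝ)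
    (hmeas : ∀ i, Measurable (φ i))
    (hindep : ProbabilityTheory.iIndepFun φ P)
    (hid : ∀ i k : Fin (m + 1),
      MeasureTheory.Measure.map (φ i) P = MeasureTheory.Measure.map (φ k) P)
    (hties : ∀ i k : Fin (m + 1), i ≠ k → P {ω | φ i ω = φ k ω} = 0)
    (k : ℕ) (hk1 : 1 ≤ k) (hkm : k ≤ m) :
    (P {ω | φ (Fin.last m) ω ≤ orderStat m (fun i => φ i.castSucc ω) k}).toReal =
      (k : ℝ) / ((m : ℝ) + 1) := by
  have hevent : {ω | φ (Fin.last m) ω ≤ orderStat m (fun i => φ i.castSucc ω) k} =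
      {ω | rank (φ · ω) (Fin.last m) < k} := by
    ext ω
    simp only [Set.mem_ofPred_eq, le_orderStat_iff hk1 hkm, rank_last]
  rw [hevent, measure_rank_lt_eq hmeas (hindep.exchangeable hmeas hid)
      (ae_injective_of_measure_eq_zero hties) _ (by rw [Fintype.card_fin]; omega),
    ENNReal.toReal_div, Fintype.card_fin, ENNReal.toReal_natCast, ENNReal.toReal_natCast, Nat.cast_succ]

/-- exchangeable rank identity under continuity. -/
theorem exchangeable_rank_identity {Ω : Type*} [MeasurableSpace Ω]
    (P : MeasureTheory.Measure Ω) [MeasureTheory.IsProbabilityMeasure P]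
    (m : ℕ) (hm : 1 ≤ m) (φ : Fin (m + 1) → Ω → ℝ)
    (hmeas : ∀ i, Measurable (φ i))
    (hindep : ProbabilityTheory.iIndepFun φ P)
    (hid : ∀ i k : Fin (m + 1),
      MeasureTheory.Measure.map (φ i) P = MeasureTheory.Measure.map (φ k) P)
    (hties : ∀ i k : Fin (m + 1), i ≠ k → P {ω | φ i ω = φ k ω} = 0)
    (k : ℕ) (hk1 : 1 ≤ k) (hkm : k ≤ m) :
    (P {ω | φ (Fin.last m) ω ≤ orderStat m (fun i => φ i.castSucc ω) k}).toReal =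
      (k : ℝ) / ((m : ℝ) + 1) :=
  exchangeable_rank_identity_general P m φ hmeas hindep hid hties k hk1 hkm
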